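/- Let X and Y be Hilbert spaces, T : X → Y a bounded linear operator with a least-squares projection approximation {(X_n, T_n)}. Then the following are equivalent: (i) s-lim_{n→∞} P_{N(T_n)} = P_{N(T)} (strong operator convergence); (ii) s-lim_{n→∞} P_{N(T) ∩ X_n} = P_{N(T)}; (iii) the LPA has kernel approximability, i.e., N(T) = {x ∈ X : dist(x, N(T) ∩ X_n) → 0 as n → ∞}. -/

import Mathlib

open Filter Topology Metric Submodule ContinuousLinearMap

/-- Orthogonal projection onto a subspace `K` (as an operator `H →L[ℝ] H`),
defined whenever `K` admits orthogonal projections (e.g. `K` closed). -/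
noncomputable def orthProj {H : Type*} [NormedAddCommGroup H] [InnerProductSpace ℝ H]
    (K : Submodule ℝ H) : H →L[ℝ] H :=
  open scoped Classical in
  if h : HasOrthogonalProjection K then
    haveI := h
    K.subtypeL.comp (orthogonalProjection K)
  else 0

/-!
Write `M = N(T)` and `Pₙ = P_{Xₙ}`. The kernel of `Tₙ = T Pₙ` splits orthogonally as
`(M ∩ Xₙ) ⊕ Xₙᗮ`, so `P_{N(Tₙ)} = P_{M ∩ Xₙ} + (1 - Pₙ)`; since `1 - Pₙ → 0` strongly, (i) and (ii)
are equivalent. Since `M ∩ Xₙ ≤ M`, `P_{M ∩ Xₙ} = P_{M ∩ Xₙ} P_M`, so (ii) only has to be checked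
on `M`, where `‖x - P_{M ∩ Xₙ} x‖ = dist(x, M ∩ Xₙ)`; and a point whose distance to the subspaces
`M ∩ Xₙ ⊆ M` tends to `0` has distance `0` to `M`, hence lies in `M`. This gives (ii) ⇔ (iii).
-/

theorem orthProj_eq_starProjection {H : Type*} [NormedAddCommGroup H] [InnerProductSpace ℝ H]
    (K : Submodule ℝ H) [h : K.HasOrthogonalProjection] : orthProj K = K.starProjection := by
  rw [orthProj, dif_pos h]
  rfl

namespace Submodule

variable {𝕜 E : Type*} [RCLike 𝕜] [NormedAddCommGroup E] [InnerProductSpace 𝕜 E]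

theorem norm_sub_starProjection_eq_infDist (K : Submodule 𝕜 E) [K.HasOrthogonalProjection]
    (x : E) : ‖x - K.starProjection x‖ = infDist x (K : Set E) := by
  rw [starProjection_minimal, infDist_eq_iInf]
  simp only [dist_eq_norm]
  rfl

theorem tendsto_starProjection_nhds_self_iff {ι : Type*} {l : Filter ι} (K : ι → Submodule 𝕜 E)
    [∀ i, (K i).HasOrthogonalProjection] (x : E) :
    Tendsto (fun i => (K i).starProjection x) l (𝓝 x) ↔
      Tendsto (fun i => infDist x (K i : Set E)) l (𝓝 0) := by
  simp only [tendsto_iff_norm_sub_tendsto_zero (b := x), norm_sub_rev _ x,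
    norm_sub_starProjection_eq_infDist]

theorem tendsto_starProjection_iff_forall_mem_iff {ι : Type*} {l : Filter ι} [l.NeBot]
    (M : Submodule 𝕜 E) [M.HasOrthogonalProjection] (K : ι → Submodule 𝕜 E)
    [∀ i, (K i).HasOrthogonalProjection] (hK : ∀ i, K i ≤ M) :
    (∀ x, Tendsto (fun i => (K i).starProjection x) l (𝓝 (M.starProjection x))) ↔
      ∀ x, x ∈ M ↔ Tendsto (fun i => infDist x (K i : Set E)) l (𝓝 0) := by
  constructor
  · intro h x
    constructor
    · intro hx
      rw [← tendsto_starProjection_nhds_self_iff]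
      simpa only [starProjection_eq_self_iff.2 hx] using h x
    · intro hx
      have hle : ∀ i, infDist x (M : Set E) ≤ infDist x (K i : Set E) := fun i =>
        infDist_le_infDist_of_subset (hK i) ⟨0, zero_mem _⟩
      have hdist : infDist x (M : Set E) = 0 :=
        le_antisymm (ge_of_tendsto hx (Eventually.of_forall hle)) infDist_nonneg
      rw [← norm_sub_starProjection_eq_infDist, norm_eq_zero, sub_eq_zero] at hdist
      exact starProjection_eq_self_iff.1 hdist.symm
  · intro h x
    have hPK : ∀ i, (K i).starProjection (M.starProjection x) = (K i).starProjection x :=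
      fun i => by rw [← comp_apply, starProjection_comp_starProjection_of_le (hK i)]
    simp only [← hPK]
    exact (tendsto_starProjection_nhds_self_iff K _).2 ((h _).1 (starProjection_apply_mem M x))

variable {F : Type*} [NormedAddCommGroup F] [NormedSpace 𝕜 F]

theorem starProjection_ker_comp_starProjection (T : E →L[𝕜] F) (V : Submodule 𝕜 E)
    [V.HasOrthogonalProjection] [(LinearMap.ker (T : E →ₗ[𝕜] F) ⊓ V).HasOrthogonalProjection]
    [(LinearMap.ker ((T ∘L V.starProjection : E →L[𝕜] F) : E →ₗ[𝕜] F)).HasOrthogonalProjection]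
    (x : E) :
    (LinearMap.ker ((T ∘L V.starProjection : E →L[𝕜] F) : E →ₗ[𝕜] F)).starProjection x =
      (LinearMap.ker (T : E →ₗ[𝕜] F) ⊓ V).starProjection x + (x - V.starProjection x) := by
  set P := V.starProjection
  set N := LinearMap.ker (T : E →ₗ[𝕜] F) ⊓ V
  set Q := N.starProjection
  have hQx : Q x ∈ N := starProjection_apply_mem N x
  have hPQ : P (Q x) = Q x := starProjection_eq_self_iff.2 (mem_inf.1 hQx).2
  have hP_sub : P (x - P x) = 0 :=
    (starProjection_apply_eq_zero_iff V).2 (sub_starProjection_mem_orthogonal x)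
  refine eq_starProjection_of_mem_orthogonal ?_ ?_
  · rw [LinearMap.mem_ker, coe_coe, comp_apply, map_add, hPQ, hP_sub, add_zero]
    exact (mem_inf.1 hQx).1
  · have hdiff : x - (Q x + (x - P x)) = P (x - Q x) := by
      rw [map_sub, hPQ]
      abel
    rw [hdiff, mem_orthogonal']
    intro w hw
    rw [inner_starProjection_left_eq_right]
    exact (mem_orthogonal' _ _).1 (sub_starProjection_mem_orthogonal x) (P w)
      ⟨hw, starProjection_apply_mem V w⟩

theorem tendsto_starProjection_ker_comp_iff {ι : Type*} {l : Filter ι} (T : E →L[𝕜] F)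
    (V : ι → Submodule 𝕜 E) [∀ i, (V i).HasOrthogonalProjection]
    [∀ i, (LinearMap.ker (T : E →ₗ[𝕜] F) ⊓ V i).HasOrthogonalProjection]
    [∀ i, (LinearMap.ker ((T ∘L (V i).starProjection : E →L[𝕜] F) : E →ₗ[𝕜] F)).HasOrthogonalProjection]
    (hV : ∀ x, Tendsto (fun i => (V i).starProjection x) l (𝓝 x)) (x y : E) :
    Tendsto (fun i =>
        (LinearMap.ker ((T ∘L (V i).starProjection : E →L[𝕜] F) : E →ₗ[𝕜] F)).starProjection x)
        l (𝓝 y) ↔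
      Tendsto (fun i => (LinearMap.ker (T : E →ₗ[𝕜] F) ⊓ V i).starProjection x) l (𝓝 y) := by
  have hres : Tendsto (fun i => x - (V i).starProjection x) l (𝓝 0) := by
    simpa using (tendsto_const_nhds (x := x)).sub (hV x)
  simp only [starProjection_ker_comp_starProjection]
  exact ⟨fun h => by simpa using h.sub hres, fun h => by simpa using h.add hres⟩

end Submodule

variable {X Y : Type*} [NormedAddCommGroup X] [InnerProductSpace ℝ X] [CompleteSpace X]
  [NormedAddCommGroup Y] [InnerProductSpace ℝ Y] [CompleteSpace Y]

theorem stmt8_general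
    (T : X →L[ℝ] Y) (Xn : ℕ → Submodule ℝ X)
    (hfin : ∀ n, FiniteDimensional ℝ (Xn n))
    (hproj : ∀ x : X, Tendsto (fun n => orthProj (Xn n) x) atTop (𝓝 x))
    (Tn : ℕ → X →L[ℝ] Y) (hTn : ∀ n, Tn n = T.comp (orthProj (Xn n))) :
    ((∀ x : X, Tendsto (fun n => orthProj (LinearMap.ker (Tn n : X →ₗ[ℝ] Y)) x) atTop
        (𝓝 (orthProj (LinearMap.ker (T : X →ₗ[ℝ] Y)) x)))
      ↔ (∀ x : X, Tendsto (fun n => orthProj (LinearMap.ker (T : X →ₗ[ℝ] Y) ⊓ Xn n) x) atTop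
        (𝓝 (orthProj (LinearMap.ker (T : X →ₗ[ℝ] Y)) x)))) ∧
    ((∀ x : X, Tendsto (fun n => orthProj (LinearMap.ker (T : X →ₗ[ℝ] Y) ⊓ Xn n) x) atTop
        (𝓝 (orthProj (LinearMap.ker (T : X →ₗ[ℝ] Y)) x)))
      ↔ (∀ x : X, x ∈ LinearMap.ker (T : X →ₗ[ℝ] Y) ↔
      Tendsto (fun n => Metric.infDist x ((LinearMap.ker (T : X →ₗ[ℝ] Y) ⊓ Xn n : Submodule ℝ X) : Set X))
        atTop (𝓝 0))) := by
  have : ∀ n, (Xn n).HasOrthogonalProjection := fun n => by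
    have := hfin n
    infer_instance
  have : ∀ n, (LinearMap.ker (T : X →ₗ[ℝ] Y) ⊓ Xn n).HasOrthogonalProjection := fun n => by
    have := hfin n
    have := finiteDimensional_of_le (inf_le_right : LinearMap.ker (T : X →ₗ[ℝ] Y) ⊓ Xn n ≤ Xn n)
    infer_instance
  simp only [orthProj_eq_starProjection] at hproj hTn ⊢
  obtain rfl : Tn = fun n => T ∘L (Xn n).starProjection := funext hTn
  exact ⟨forall_congr' fun x => tendsto_starProjection_ker_comp_iff T Xn hproj x _,
    tendsto_starProjection_iff_forall_mem_iff _ _ fun _ => inf_le_left⟩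

/-- Equivalence of `s-lim P_{N(Tₙ)} = P_{N(T)}`, `s-lim P_{N(T)∩Xₙ} = P_{N(T)}`,
and kernel approximability. -/
theorem stmt8
    (T : X →L[ℝ] Y) (Xn : ℕ → Submodule ℝ X)
    (hfin : ∀ n, FiniteDimensional ℝ (Xn n))
    (hinf : ¬ FiniteDimensional ℝ X)
    (hproj : ∀ x : X, Tendsto (fun n => orthProj (Xn n) x) atTop (𝓝 x))
    (Tn : ℕ → X →L[ℝ] Y) (hTn : ∀ n, Tn n = T.comp (orthProj (Xn n))) :
    ((∀ x : X, Tendsto (fun n => orthProj (LinearMap.ker (Tn n : X →ₗ[ℝ] Y)) x) atTop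
        (𝓝 (orthProj (LinearMap.ker (T : X →ₗ[ℝ] Y)) x)))
      ↔ (∀ x : X, Tendsto (fun n => orthProj (LinearMap.ker (T : X →ₗ[ℝ] Y) ⊓ Xn n) x) atTop
        (𝓝 (orthProj (LinearMap.ker (T : X →ₗ[ℝ] Y)) x)))) ∧
    ((∀ x : X, Tendsto (fun n => orthProj (LinearMap.ker (T : X →ₗ[ℝ] Y) ⊓ Xn n) x) atTop
        (𝓝 (orthProj (LinearMap.ker (T : X →ₗ[ℝ] Y)) x)))
      ↔ (∀ x : X, x ∈ LinearMap.ker (T : X →ₗ[ℝ] Y) ↔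
      Tendsto (fun n => Metric.infDist x ((LinearMap.ker (T : X →ₗ[ℝ] Y) ⊓ Xn n : Submodule ℝ X) : Set X))
        atTop (𝓝 0))) :=
  stmt8_general T Xn hfin hproj Tn hTn
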